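/- arXiv:2009.10280 — 5 statements merged into one kernel-verified Lean document; each statement's English description precedes it below -/
import Mathlib

section
/- Let C > 0 be a constant such that ‖w‖ ≤ C‖T w‖ for all w ∈ V. Then there exists a bounded linear operator G : H → H with operator norm ‖G‖ ≤ C such that for every v ∈ H the vector G v belongs to the topological closure of T(V) and ⟨G v, T w⟩ = ⟨v, w⟩ for all w ∈ V. -/
/-!
By the Carleman estimate, `T w ↦ w` is bounded by `C` on `T(V)`, so it extends to an operator
`A : S →L H` with `‖A‖ ≤ C` on the closure `S` of `T(V)`. The adjoint `G = A† : H →L S` then has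
`‖G‖ ≤ C`, takes values in `S`, and `⟪G v, T w⟫ = ⟪v, A (T w)⟫ = ⟪v, w⟫`.
-/

open scoped InnerProduct InnerProductSpace

section LeftInverse

variable {𝕜 E F : Type*} [NontriviallyNormedField 𝕜]
  [NormedAddCommGroup E] [NormedSpace 𝕜 E] [NormedAddCommGroup F] [NormedSpace 𝕜 F]

theorem LinearMap.denseRange_codRestrict_topologicalClosure_range {V : Submodule 𝕜 E}
    (T : V →ₗ[𝕜] F) :
    DenseRange (T.codRestrict (LinearMap.range T).topologicalClosure
      fun w => (LinearMap.range T).le_topologicalClosure (LinearMap.mem_range_self T w)) := by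
  rw [DenseRange, Subtype.dense_iff, ← Set.range_comp]
  intro x hx
  rwa [Submodule.topologicalClosure_coe] at hx

theorem LinearMap.exists_leftInverse_on_topologicalClosure_range [CompleteSpace E]
    {V : Submodule 𝕜 E} (T : V →ₗ[𝕜] F) {C : ℝ} (hC : 0 ≤ C)
    (hT : ∀ w : V, ‖(w : E)‖ ≤ C * ‖T w‖) :
    ∃ A : (LinearMap.range T).topologicalClosure →L[𝕜] E, ‖A‖ ≤ C ∧ ∀ w : V,
      A ⟨T w, (LinearMap.range T).le_topologicalClosure (LinearMap.mem_range_self T w)⟩ = w := by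
  have hdense := T.denseRange_codRestrict_topologicalClosure_range
  exact ⟨V.subtype.extendOfNorm _, LinearMap.opNorm_extendOfNorm_le hdense hC hT,
    LinearMap.extendOfNorm_eq hdense ⟨C, hT⟩⟩

end LeftInverse

section SolutionOperator

variable {𝕜 E F : Type*} [RCLike 𝕜] [NormedAddCommGroup E] [InnerProductSpace 𝕜 E] [CompleteSpace E]
  [NormedAddCommGroup F] [InnerProductSpace 𝕜 F] [CompleteSpace F]

theorem LinearMap.exists_solutionOperator {V : Submodule 𝕜 E} (T : V →ₗ[𝕜] F) {C : ℝ}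
    (hC : 0 ≤ C) (hT : ∀ w : V, ‖(w : E)‖ ≤ C * ‖T w‖) :
    ∃ G : E →L[𝕜] F, ‖G‖ ≤ C ∧ ∀ v : E, G v ∈ (LinearMap.range T).topologicalClosure ∧
      ∀ w : V, ⟪G v, T w⟫_𝕜 = ⟪v, (w : E)⟫_𝕜 := by
  obtain ⟨A, hAC, hA⟩ := T.exists_leftInverse_on_topologicalClosure_range hC hT
  let S := (LinearMap.range T).topologicalClosure
  refine ⟨S.subtypeₗᵢ.toContinuousLinearMap ∘L (A†), ?_, fun v => ⟨((A†) v).2, fun w => ?_⟩⟩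
  · rwa [S.subtypeₗᵢ.norm_toContinuousLinearMap_comp, LinearIsometryEquiv.norm_map]
  · rw [← hA w]
    exact ContinuousLinearMap.adjoint_inner_left A ⟨T w, _⟩ v

end SolutionOperator

/-- Abstract solution operator (construction of `H_φ` in Theorem 2.3): under the
Carleman estimate `‖w‖ ≤ C‖T w‖` on `V`, there is a bounded operator `G` of norm
`≤ C` with `G v` in the closure of `T(V)` and `⟪G v, T w⟫ = ⟪v, w⟫` for all `w ∈ V`. -/
theorem stmt_1 {H : Type*} [NormedAddCommGroup H] [InnerProductSpace ℂ H] [CompleteSpace H]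
    (V : Submodule ℂ H) (T : V →ₗ[ℂ] H) (C : ℝ) (hC : 0 < C)
    (hCar : ∀ w : V, ‖(w : H)‖ ≤ C * ‖T w‖) :
    ∃ G : H →L[ℂ] H, ‖G‖ ≤ C ∧
      ∀ v : H, G v ∈ closure (Set.range fun w : V => T w) ∧
        ∀ w : V, (inner ℂ (G v) (T w) : ℂ) = inner ℂ v (w : H) := by
  obtain ⟨G, hGC, hG⟩ := T.exists_solutionOperator hC.le hCar
  refine ⟨G, hGC, fun v => ⟨?_, (hG v).2⟩⟩
  have hGv := (hG v).1
  rwa [← SetLike.mem_coe, Submodule.topologicalClosure_coe, LinearMap.coe_range] at hGv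
end

section
/- The adjoint of the bounded operator H_A ∘ (I − π_B) equals H_B ∘ (I − π_A); that is, (H_A (I − π_B))† = H_B (I − π_A), where † denotes the Hilbert-space adjoint and I is the identity operator on H. -/
/-!
Write `P_A`, `P_B` for the orthogonal projections onto the closures of `A(V)` and `B(V)`, so that
`1 - π_B = P_A` and `1 - π_A = P_B`. The formal adjoint relation and the defining identities of
`H_A`, `H_B` give `⟪H_B (B f), A g⟫ = conj ⟪A g, f⟫ = ⟪B f, H_A (A g)⟫`, which extends by continuity
to `⟪H_B u, v⟫ = ⟪u, H_A v⟫` for `u ∈ closure B(V)` and `v ∈ closure A(V)`. Since `H_B` takes values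
in `closure A(V)` and `H_A` in `closure B(V)`, the projections can be inserted for free:
`⟪H_B P_B x, y⟫ = ⟪H_B P_B x, P_A y⟫ = ⟪P_B x, H_A P_A y⟫ = ⟪x, H_A P_A y⟫`.
-/

section

open ContinuousLinearMap Submodule

variable {𝕜 E : Type*} [RCLike 𝕜] [NormedAddCommGroup E] [InnerProductSpace 𝕜 E]

theorem inner_map_left_eq_inner_map_right_of_mem_closure {S T : E →L[𝕜] E} {s t : Set E}
    (h : ∀ u ∈ s, ∀ v ∈ t, inner 𝕜 (T u) v = inner 𝕜 u (S v)) :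
    ∀ u ∈ closure s, ∀ v ∈ closure t, inner 𝕜 (T u) v = inner 𝕜 u (S v) := by
  have hst : Set.EqOn (fun p : E × E => inner 𝕜 (T p.1) p.2) (fun p => inner 𝕜 p.1 (S p.2))
      (s ×ˢ t) := fun p hp => h p.1 hp.1 p.2 hp.2
  have hcl := hst.closure (by fun_prop) (by fun_prop)
  rw [closure_prod_eq] at hcl
  exact fun u hu v hv => hcl (x := (u, v)) ⟨hu, hv⟩

theorem adjoint_comp_starProjection_eq [CompleteSpace E] {U W : Submodule 𝕜 E}
    [U.HasOrthogonalProjection] [W.HasOrthogonalProjection] {S T : E →L[𝕜] E}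
    (hS : ∀ x, S x ∈ W) (hT : ∀ x, T x ∈ U)
    (h : ∀ u ∈ W, ∀ v ∈ U, inner 𝕜 (T u) v = inner 𝕜 u (S v)) :
    adjoint (S ∘L U.starProjection) = T ∘L W.starProjection := by
  refine ((eq_adjoint_iff _ _).mpr fun x y => ?_).symm
  calc inner 𝕜 (T (W.starProjection x)) y
      = inner 𝕜 (U.starProjection (T (W.starProjection x))) y := by
        rw [starProjection_eq_self_iff.mpr (hT _)]
    _ = inner 𝕜 (T (W.starProjection x)) (U.starProjection y) :=
        inner_starProjection_left_eq_right U _ _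
    _ = inner 𝕜 (W.starProjection x) (S (U.starProjection y)) :=
        h _ (W.starProjection_apply_mem x) _ (U.starProjection_apply_mem y)
    _ = inner 𝕜 x (W.starProjection (S (U.starProjection y))) :=
        inner_starProjection_left_eq_right W _ _
    _ = inner 𝕜 x (S (U.starProjection y)) := by
        rw [starProjection_eq_self_iff.mpr (hS _)]

theorem mem_orthogonal_orthogonal_range_iff [CompleteSpace E] {M : Type*} [AddCommGroup M]
    [Module 𝕜 M] {f : M →ₗ[𝕜] E} {x : E} :
    x ∈ (LinearMap.range f)ᗮᗮ ↔ x ∈ closure (Set.range fun m => f m) := by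
  rw [orthogonal_orthogonal_eq_closure, ← SetLike.mem_coe, topologicalClosure_coe,
    LinearMap.coe_range]

theorem inner_apply_apply_eq_of_formal_adjoint {V : Submodule 𝕜 E} {A B : V →ₗ[𝕜] E}
    (hAB : ∀ f g : V, inner 𝕜 (A f) (g : E) = inner 𝕜 (f : E) (B g)) {HA HB : E →L[𝕜] E}
    (hHA : ∀ v : E, ∀ w : V, inner 𝕜 (HA v) (B w) = inner 𝕜 v (w : E))
    (hHB : ∀ v : E, ∀ w : V, inner 𝕜 (HB v) (A w) = inner 𝕜 v (w : E)) (f g : V) :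
    inner 𝕜 (HB (B f)) (A g) = inner 𝕜 (B f) (HA (A g)) := by
  rw [hHB, ← inner_conj_symm (B f) (HA (A g)), hHA, hAB, inner_conj_symm]

end

/-- Equation (2.4) of the paper: `(H_A (I − π_B))* = H_B (I − π_A)`, where `π_A`, `π_B`
are the orthogonal projections onto `(B(V))ᗮ` and `(A(V))ᗮ` respectively. -/
theorem stmt_2 {H : Type*} [NormedAddCommGroup H] [InnerProductSpace ℂ H] [CompleteSpace H]
    (V : Submodule ℂ H) (A B : V →ₗ[ℂ] H)
    (hAB : ∀ f g : V, (inner ℂ (A f) (g : H) : ℂ) = inner ℂ (f : H) (B g))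
    (HA HB : H →L[ℂ] H)
    (hHAran : ∀ v : H, HA v ∈ closure (Set.range fun w : V => B w))
    (hHBran : ∀ v : H, HB v ∈ closure (Set.range fun w : V => A w))
    (hHA : ∀ v : H, ∀ w : V, (inner ℂ (HA v) (B w) : ℂ) = inner ℂ v (w : H))
    (hHB : ∀ v : H, ∀ w : V, (inner ℂ (HB v) (A w) : ℂ) = inner ℂ v (w : H))
    (πA πB : H →L[ℂ] H)
    (hπA : πA = (LinearMap.range B)ᗮ.subtypeL ∘L Submodule.orthogonalProjection (LinearMap.range B)ᗮ)
    (hπB : πB = (LinearMap.range A)ᗮ.subtypeL ∘L Submodule.orthogonalProjection (LinearMap.range A)ᗮ) :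
    ContinuousLinearMap.adjoint (HA ∘L (1 - πB)) = HB ∘L (1 - πA) := by
  have hπA' : πA = (LinearMap.range B)ᗮ.starProjection := hπA
  have hπB' : πB = (LinearMap.range A)ᗮ.starProjection := hπB
  rw [hπA', hπB', ← Submodule.starProjection_orthogonal', ← Submodule.starProjection_orthogonal']
  refine adjoint_comp_starProjection_eq (mem_orthogonal_orthogonal_range_iff.mpr <| hHAran ·)
    (mem_orthogonal_orthogonal_range_iff.mpr <| hHBran ·) fun u hu v hv => ?_
  refine inner_map_left_eq_inner_map_right_of_mem_closure ?_
    u (mem_orthogonal_orthogonal_range_iff.mp hu) v (mem_orthogonal_orthogonal_range_iff.mp hv)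
  rintro _ ⟨f, rfl⟩ _ ⟨g, rfl⟩
  exact inner_apply_apply_eq_of_formal_adjoint hAB hHA hHB f g
end

section
/- Define G_A = H_A + π_A ∘ H_B†, where H_B† is the Hilbert-space adjoint of H_B. Then ⟨G_A v, B w⟩ = ⟨v, w⟩ for all v ∈ H and all w ∈ V, and the operator norm satisfies ‖G_A‖ ≤ ‖H_A‖ + ‖H_B‖. -/
/-!
The correction term `π_A H_B*` takes values in `(B V)ᗮ`, so it is invisible when paired with
`B w`, and `⟪G_A v, B w⟫ = ⟪H_A v, B w⟫ = ⟪v, w⟫`. The norm bound holds because an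
orthogonal projection has norm at most `1` and the adjoint is an isometry.
-/

namespace ContinuousLinearMap

variable {𝕜 E F : Type*} [RCLike 𝕜]
  [NormedAddCommGroup E] [InnerProductSpace 𝕜 E]
  [NormedAddCommGroup F] [InnerProductSpace 𝕜 F]

theorem inner_add_starProjection_orthogonal_comp_apply_of_mem (T R : E →L[𝕜] F)
    {K : Submodule 𝕜 F} [Kᗮ.HasOrthogonalProjection] (v : E) {w : F} (hw : w ∈ K) :
    inner 𝕜 ((T + Kᗮ.starProjection ∘L R) v) w = inner 𝕜 (T v) w := by
  have hperp : inner 𝕜 (Kᗮ.starProjection (R v)) w = 0 :=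
    Submodule.inner_left_of_mem_orthogonal hw (Kᗮ.starProjection_apply_mem _)
  rw [add_apply, comp_apply, inner_add_left, hperp, add_zero]

theorem norm_add_starProjection_comp_adjoint_le [CompleteSpace E] [CompleteSpace F]
    (T : E →L[𝕜] F) (S : F →L[𝕜] E) (K : Submodule 𝕜 F) [K.HasOrthogonalProjection] :
    ‖T + K.starProjection ∘L adjoint S‖ ≤ ‖T‖ + ‖S‖ :=
  calc ‖T + K.starProjection ∘L adjoint S‖
      ≤ ‖T‖ + ‖K.starProjection ∘L adjoint S‖ := norm_add_le _ _
    _ ≤ ‖T‖ + ‖K.starProjection‖ * ‖adjoint S‖ := by grw [opNorm_comp_le]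
    _ ≤ ‖T‖ + 1 * ‖S‖ := by
        gcongr
        · exact K.starProjection_norm_le
        · exact (adjoint.norm_map S).le
    _ = ‖T‖ + ‖S‖ := by rw [one_mul]

end ContinuousLinearMap

theorem stmt_3_general {H : Type*} [NormedAddCommGroup H] [InnerProductSpace ℂ H] [CompleteSpace H]
    (V : Submodule ℂ H) (B : V →ₗ[ℂ] H)
    (HA HB : H →L[ℂ] H)
    (hHA : ∀ v : H, ∀ w : V, (inner ℂ (HA v) (B w) : ℂ) = inner ℂ v (w : H))
    (πA : H →L[ℂ] H)
    (hπA : πA = (LinearMap.range B)ᗮ.subtypeL ∘L Submodule.orthogonalProjectionOnto (LinearMap.range B)ᗮ)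
    (GA : H →L[ℂ] H)
    (hGA : GA = HA + πA ∘L ContinuousLinearMap.adjoint HB) :
    (∀ v : H, ∀ w : V, (inner ℂ (GA v) (B w) : ℂ) = inner ℂ v (w : H)) ∧
      ‖GA‖ ≤ ‖HA‖ + ‖HB‖ := by
  change πA = (LinearMap.range B)ᗮ.starProjection at hπA
  subst hπA hGA
  refine ⟨fun v w => ?_, HA.norm_add_starProjection_comp_adjoint_le HB _⟩
  rw [HA.inner_add_starProjection_orthogonal_comp_apply_of_mem _ v (LinearMap.mem_range_self B w),
    hHA]

/-- Items (i) and (ii) of Theorem 2.3: the Green operator `G_A = H_A + π_A H_B*`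
satisfies `⟪G_A v, B w⟫ = ⟪v, w⟫` for all `v ∈ H`, `w ∈ V`, and `‖G_A‖ ≤ ‖H_A‖ + ‖H_B‖`. -/
theorem stmt_3 {H : Type*} [NormedAddCommGroup H] [InnerProductSpace ℂ H] [CompleteSpace H]
    (V : Submodule ℂ H) (A B : V →ₗ[ℂ] H)
    (hAB : ∀ f g : V, (inner ℂ (A f) (g : H) : ℂ) = inner ℂ (f : H) (B g))
    (HA HB : H →L[ℂ] H)
    (hHAran : ∀ v : H, HA v ∈ closure (Set.range fun w : V => B w))
    (hHBran : ∀ v : H, HB v ∈ closure (Set.range fun w : V => A w))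
    (hHA : ∀ v : H, ∀ w : V, (inner ℂ (HA v) (B w) : ℂ) = inner ℂ v (w : H))
    (hHB : ∀ v : H, ∀ w : V, (inner ℂ (HB v) (A w) : ℂ) = inner ℂ v (w : H))
    (πA : H →L[ℂ] H)
    (hπA : πA = (LinearMap.range B)ᗮ.subtypeL ∘L Submodule.orthogonalProjectionOnto (LinearMap.range B)ᗮ)
    (GA : H →L[ℂ] H)
    (hGA : GA = HA + πA ∘L ContinuousLinearMap.adjoint HB) :
    (∀ v : H, ∀ w : V, (inner ℂ (GA v) (B w) : ℂ) = inner ℂ v (w : H)) ∧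
      ‖GA‖ ≤ ‖HA‖ + ‖HB‖ :=
  stmt_3_general V B HA HB hHA πA hπA GA hGA
end

section
/- Define G_A = H_A + π_A ∘ H_B† and G_B = H_B + π_B ∘ H_A†, where † denotes the Hilbert-space adjoint. Then G_A† = G_B. -/
/-!
Write `P = 1 - π_A` and `Q = 1 - π_B` for the projections onto the closures of `B(V)` and `A(V)`.
Since `H_A` lands in the range of `P` and `H_B` in that of `Q`, the difference
`⟨G_B x, y⟩ - ⟨x, G_A y⟩` reduces to `⟨H_B P x, Q y⟩ - ⟨P x, H_A Q y⟩`. This vanishes because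
`⟨H_B u, v⟩ = ⟨u, H_A v⟩` on `closure B(V) × closure A(V)`: on `B(V) × A(V)` both sides equal
`⟨B f, g⟩` by the defining relations of `H_A`, `H_B` and the formal adjointness of `A` and `B`,
and the identity extends by continuity.
-/

open ContinuousLinearMap Submodule

section

variable {𝕜 E : Type*} [RCLike 𝕜] [NormedAddCommGroup E] [InnerProductSpace 𝕜 E]

theorem inner_apply_eq_inner_apply_of_mem_closure (S T : E →L[𝕜] E) {s t : Set E}
    (h : ∀ u ∈ s, ∀ v ∈ t, inner 𝕜 (T u) v = inner 𝕜 u (S v)) {u v : E}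
    (hu : u ∈ closure s) (hv : v ∈ closure t) : inner 𝕜 (T u) v = inner 𝕜 u (S v) := by
  have hEq : Set.EqOn (fun p : E × E => inner 𝕜 (T p.1) p.2) (fun p => inner 𝕜 p.1 (S p.2))
      (closure s ×ˢ closure t) :=
    Set.EqOn.of_subset_closure (s := s ×ˢ t) (fun p hp => h _ hp.1 _ hp.2) (by fun_prop)
      (by fun_prop) (Set.prod_mono subset_closure subset_closure) closure_prod_eq.ge
  exact hEq (x := (u, v)) ⟨hu, hv⟩

theorem adjoint_add_starProjection_comp_adjoint [CompleteSpace E] (K L : Submodule 𝕜 E)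
    [K.HasOrthogonalProjection] [L.HasOrthogonalProjection] (S T : E →L[𝕜] E)
    (hS : ∀ v, S v ∈ Kᗮ) (hT : ∀ v, T v ∈ Lᗮ)
    (hsymm : ∀ u ∈ Kᗮ, ∀ v ∈ Lᗮ, inner 𝕜 (T u) v = inner 𝕜 u (S v)) :
    adjoint (S + K.starProjection ∘L adjoint T) = T + L.starProjection ∘L adjoint S := by
  refine ((eq_adjoint_iff _ _).2 fun x y => ?_).symm
  have hx : inner 𝕜 (K.starProjection x) (S (y - L.starProjection y)) = 0 :=
    inner_right_of_mem_orthogonal (K.starProjection_apply_mem x) (hS _)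
  have hy : inner 𝕜 (T (x - K.starProjection x)) (L.starProjection y) = 0 :=
    inner_left_of_mem_orthogonal (L.starProjection_apply_mem y) (hT _)
  have key :=
    hsymm _ (K.sub_starProjection_mem_orthogonal x) _ (L.sub_starProjection_mem_orthogonal y)
  rw [add_apply, add_apply, comp_apply, comp_apply, inner_add_left, inner_add_right,
    inner_starProjection_left_eq_right, adjoint_inner_left, ← inner_starProjection_left_eq_right,
    adjoint_inner_right]
  simp only [map_sub, inner_sub_left, inner_sub_right] at hx hy key
  linear_combination key - hx + hy

end

/-- Item (iv) of Theorem 2.3: the Green operators `G_A = H_A + π_A H_B*` and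
`G_B = H_B + π_B H_A*` satisfy `G_A* = G_B`. -/
theorem stmt_4 {H : Type*} [NormedAddCommGroup H] [InnerProductSpace ℂ H] [CompleteSpace H]
    (V : Submodule ℂ H) (A B : V →ₗ[ℂ] H)
    (hAB : ∀ f g : V, (inner ℂ (A f) (g : H) : ℂ) = inner ℂ (f : H) (B g))
    (HA HB : H →L[ℂ] H)
    (hHAran : ∀ v : H, HA v ∈ closure (Set.range fun w : V => B w))
    (hHBran : ∀ v : H, HB v ∈ closure (Set.range fun w : V => A w))
    (hHA : ∀ v : H, ∀ w : V, (inner ℂ (HA v) (B w) : ℂ) = inner ℂ v (w : H))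
    (hHB : ∀ v : H, ∀ w : V, (inner ℂ (HB v) (A w) : ℂ) = inner ℂ v (w : H))
    (πA πB : H →L[ℂ] H)
    (hπA : πA = (LinearMap.range B)ᗮ.subtypeL ∘L Submodule.orthogonalProjection (LinearMap.range B)ᗮ)
    (hπB : πB = (LinearMap.range A)ᗮ.subtypeL ∘L Submodule.orthogonalProjection (LinearMap.range A)ᗮ)
    (GA GB : H →L[ℂ] H)
    (hGA : GA = HA + πA ∘L ContinuousLinearMap.adjoint HB)
    (hGB : GB = HB + πB ∘L ContinuousLinearMap.adjoint HA) :
    ContinuousLinearMap.adjoint GA = GB := by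
  have hclosure (C : V →ₗ[ℂ] H) (u : H) :
      u ∈ closure (Set.range fun w : V => C w) ↔ u ∈ (LinearMap.range C)ᗮᗮ := by
    rw [orthogonal_orthogonal_eq_closure, ← SetLike.mem_coe, topologicalClosure_coe,
      LinearMap.coe_range]
  have hsymm (f g : V) : inner ℂ (HB (B f)) (A g) = inner ℂ (B f : H) (HA (A g)) := by
    rw [hHB, ← inner_conj_symm _ (HA (A g)), hHA, hAB, inner_conj_symm]
  subst hπA hπB hGA hGB
  refine adjoint_add_starProjection_comp_adjoint _ _ HA HB (fun v => (hclosure B _).1 (hHAran v))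
    (fun v => (hclosure A _).1 (hHBran v)) fun u hu v hv => ?_
  exact inner_apply_eq_inner_apply_of_mem_closure HA HB
    (by rintro _ ⟨f, rfl⟩ _ ⟨g, rfl⟩; exact hsymm f g)
    ((hclosure B u).2 hu) ((hclosure A v).2 hv)
end

section
/- Assume in addition that V is dense in H. Define G_A = H_A + π_A ∘ H_B†, where † denotes the Hilbert-space adjoint. Then G_A(A w) = w for every w ∈ V. -/
set_option synthInstance.maxHeartbeats 400000

/-!
Pair `G_A (A w)` and `w` with `K = B(V)` and with `Kᗮ`: if the pairings agree, the difference lies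
in `Kᗮ` and is orthogonal to `Kᗮ`, hence vanishes. Against `B u`, the term `π_A H_B* (A w)` vanishes and
`⟨H_A (A w), B u⟩ = ⟨A w, u⟩ = ⟨w, B u⟩`.
Against `z ∈ Kᗮ`, the term `H_A (A w) ∈ closure K` vanishes, and since `π_A` is self-adjoint and
fixes `z`, `⟨π_A H_B* (A w), z⟩ = ⟨A w, H_B z⟩ = ⟨w, z⟩`.
-/

namespace Submodule

variable {𝕜 E : Type*} [RCLike 𝕜] [NormedAddCommGroup E] [InnerProductSpace 𝕜 E]

local notation "⟪" x ", " y "⟫" => inner 𝕜 x y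

theorem eq_of_inner_eq_of_inner_orthogonal_eq (K : Submodule 𝕜 E) {x y : E}
    (hK : ∀ k ∈ K, ⟪x, k⟫ = ⟪y, k⟫) (hKperp : ∀ k ∈ Kᗮ, ⟪x, k⟫ = ⟪y, k⟫) : x = y := by
  have hxy : x - y ∈ Kᗮ := (mem_orthogonal' K _).2 fun k hk => by
    rw [inner_sub_left, hK k hk, sub_self]
  rw [← sub_eq_zero, ← inner_self_eq_zero (𝕜 := 𝕜), inner_sub_left, hKperp _ hxy, sub_self]

theorem inner_starProjection_left_of_mem (U : Submodule 𝕜 E) [U.HasOrthogonalProjection]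
    {z : E} (hz : z ∈ U) (y : E) : ⟪U.starProjection y, z⟫ = ⟪y, z⟫ := by
  rw [inner_starProjection_left_eq_right, starProjection_eq_self_iff.2 hz]

theorem inner_right_of_mem_closure_of_mem_orthogonal {K : Submodule 𝕜 E} {x z : E}
    (hx : x ∈ closure (K : Set E)) (hz : z ∈ Kᗮ) : ⟪x, z⟫ = 0 :=
  inner_right_of_mem_orthogonal (K := K.topologicalClosure) hx (K.orthogonal_closure ▸ hz)

end Submodule

open Submodule in
theorem stmt_5_general {H : Type*} [NormedAddCommGroup H] [InnerProductSpace ℂ H] [CompleteSpace H]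
    (V : Submodule ℂ H) (A B : V →ₗ[ℂ] H)
    (hAB : ∀ f g : V, (inner ℂ (A f) (g : H) : ℂ) = inner ℂ (f : H) (B g))
    (HA HB : H →L[ℂ] H)
    (hHAran : ∀ v : H, HA v ∈ closure (Set.range fun w : V => B w))
    (hHA : ∀ v : H, ∀ w : V, (inner ℂ (HA v) (B w) : ℂ) = inner ℂ v (w : H))
    (hHB : ∀ v : H, ∀ w : V, (inner ℂ (HB v) (A w) : ℂ) = inner ℂ v (w : H))
    (πA : H →L[ℂ] H)
    (hπA : πA = (LinearMap.range B)ᗮ.subtypeL ∘L (LinearMap.range B)ᗮ.orthogonalProjectionOnto)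
    (GA : H →L[ℂ] H)
    (hGA : GA = HA + πA ∘L ContinuousLinearMap.adjoint HB) :
    ∀ w : V, GA (A w) = (w : H) := by
  intro w
  set K := LinearMap.range B
  have hπA' : πA = Kᗮ.starProjection := hπA
  subst hGA hπA'
  refine K.eq_of_inner_eq_of_inner_orthogonal_eq (fun k hk => ?_) (fun z hz => ?_)
  · obtain ⟨u, rfl⟩ := hk
    have hproj : inner ℂ (Kᗮ.starProjection (HB.adjoint (A w))) (B u) = 0 :=
      inner_left_of_mem_orthogonal (LinearMap.mem_range_self B u) (starProjection_apply_mem _ _)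
    simp only [add_apply, ContinuousLinearMap.comp_apply, inner_add_left,
      hproj, add_zero, hHA, hAB]
  · have hHA0 : inner ℂ (HA (A w)) z = 0 :=
      inner_right_of_mem_closure_of_mem_orthogonal (hHAran (A w)) hz
    simp only [add_apply, ContinuousLinearMap.comp_apply, inner_add_left,
      hHA0, zero_add, inner_starProjection_left_of_mem _ hz, ContinuousLinearMap.adjoint_inner_left]
    rw [← inner_conj_symm, hHB, inner_conj_symm]

/-- Item (v) of Theorem 2.3: if `V` is dense in `H`, the Green operator
`G_A = H_A + π_A H_B*` satisfies `G_A (A w) = w` for every `w ∈ V`. -/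
theorem stmt_5 {H : Type*} [NormedAddCommGroup H] [InnerProductSpace ℂ H] [CompleteSpace H]
    (V : Submodule ℂ H) (hV : Dense (V : Set H)) (A B : V →ₗ[ℂ] H)
    (hAB : ∀ f g : V, (inner ℂ (A f) (g : H) : ℂ) = inner ℂ (f : H) (B g))
    (HA HB : H →L[ℂ] H)
    (hHAran : ∀ v : H, HA v ∈ closure (Set.range fun w : V => B w))
    (hHBran : ∀ v : H, HB v ∈ closure (Set.range fun w : V => A w))
    (hHA : ∀ v : H, ∀ w : V, (inner ℂ (HA v) (B w) : ℂ) = inner ℂ v (w : H))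
    (hHB : ∀ v : H, ∀ w : V, (inner ℂ (HB v) (A w) : ℂ) = inner ℂ v (w : H))
    (πA : H →L[ℂ] H)
    (hπA : πA = (LinearMap.range B)ᗮ.subtypeL ∘L (LinearMap.range B)ᗮ.orthogonalProjectionOnto)
    (GA : H →L[ℂ] H)
    (hGA : GA = HA + πA ∘L ContinuousLinearMap.adjoint HB) :
    ∀ w : V, GA (A w) = (w : H) :=
  stmt_5_general V A B hAB HA HB hHAran hHA hHB πA hπA GA hGA
end
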